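/- arXiv:2507.09004 — 2 statements merged into one kernel-verified Lean document; each statement's English description precedes it below -/
import Mathlib

section
/- Let X and Y be real-valued random variables defined on the same probability space, with quantile functions Q_X(u) = inf{x : P(X ≤ x) ≥ u} and Q_Y(u) = inf{x : P(Y ≤ x) ≥ u}. Then for every r with 1 ≤ r < ∞, ∫_0^1 |Q_X(u) − Q_Y(u)|^r du ≤ E[|X − Y|^r]. -/
/-!
The quantile coupling `u ↦ (Q_X u, Q_Y u)`, `u ∈ (0,1)`, puts mass `(F_X s - F_Y c)₊` on the
orthant `{x ≤ s, c < y}`, and by the Fréchet bound this is at most `P(X ≤ s, c < Y)`.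
The cost `(y - x)₊ ^ r` is a superposition of such orthants:
`(y - x)₊ ^ r = ∫ k_s(x, y) ds` with `k_s(x, y) = 1{x ≤ s < y} r (y - s) ^ (r - 1)`, and for
`r ≥ 1` every superlevel set of `k_s` is an orthant `Iic s ×ˢ Ioi c` (or empty), since
`k_s(x, ·)` is monotone with open superlevel sets. By the layer-cake formula the cost of the
quantile coupling is dominated by that of `(X, Y)`; finally
`|x - y| ^ r = (y - x)₊ ^ r + (x - y)₊ ^ r`.
-/

open MeasureTheory

/-- The (lower) quantile function of a law `μ` on `ℝ`:
`Q(u) = inf {x : μ(-∞, x] ≥ u}`. -/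
noncomputable def quantileFun (μ : Measure ℝ) (u : ℝ) : ℝ :=
  sInf {x : ℝ | u ≤ (μ (Set.Iic x)).toReal}

open Set Filter ProbabilityTheory

theorem IsUpperSet.eq_Ioi_csInf {α : Type*} [ConditionallyCompleteLinearOrder α]
    [TopologicalSpace α] [OrderTopology α] [DenselyOrdered α] [NoMinOrder α] {U : Set α}
    (hU : IsUpperSet U) (hUo : IsOpen U) (hb : BddBelow U) (hne : U.Nonempty) :
    U = Ioi (sInf U) := by
  have hnot : sInf U ∉ U := fun hmem => by
    obtain ⟨a, ha, hsub⟩ := exists_Ioc_subset_of_mem_nhds (hUo.mem_nhds hmem) (exists_lt _)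
    obtain ⟨b, hab, hb'⟩ := exists_between ha
    exact (csInf_le hb (hsub ⟨hab, hb'.le⟩)).not_gt hb'
  ext y
  refine ⟨fun hy => (csInf_le hb hy).lt_of_ne fun h => hnot (h ▸ hy), fun hy => ?_⟩
  obtain ⟨z, hz, hzy⟩ := exists_lt_of_csInf_lt hne hy
  exact hU hzy.le hz

section Frechet

variable {Ω α β : Type*} [MeasurableSpace Ω] [MeasurableSpace α] [MeasurableSpace β]
  (P : Measure Ω) {X : Ω → α} {Y : Ω → β} {A : Set α} {B : Set β}

lemma map_sub_map_le_map_prod_compl (hX : Measurable X) (hY : Measurable Y)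
    (hA : MeasurableSet A) (hB : MeasurableSet B) :
    P.map X A - P.map Y B ≤ P.map (fun ω => (X ω, Y ω)) (A ×ˢ Bᶜ) := by
  rw [Measure.map_apply hX hA, Measure.map_apply hY hB,
    Measure.map_apply (hX.prodMk hY) (hA.prod hB.compl)]
  exact le_measure_sdiff

lemma map_sub_map_le_map_compl_prod (hX : Measurable X) (hY : Measurable Y)
    (hA : MeasurableSet A) (hB : MeasurableSet B) :
    P.map Y B - P.map X A ≤ P.map (fun ω => (X ω, Y ω)) (Aᶜ ×ˢ B) := by
  rw [Measure.map_apply hX hA, Measure.map_apply hY hB,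
    Measure.map_apply (hX.prodMk hY) (hA.compl.prod hB)]
  exact le_measure_sdiff.trans_eq (congrArg P (by ext; exact and_comm))

end Frechet

noncomputable def truncPowKernel (r s : ℝ) (p : ℝ × ℝ) : ℝ :=
  if p.1 ≤ s ∧ s < p.2 then r * (p.2 - s) ^ (r - 1) else 0

section TruncPowKernel

variable {r : ℝ}

lemma truncPowKernel_nonneg (hr : 0 ≤ r) (s : ℝ) (p : ℝ × ℝ) : 0 ≤ truncPowKernel r s p := by
  unfold truncPowKernel
  split_ifs with h
  · exact mul_nonneg hr (Real.rpow_nonneg (sub_nonneg.2 h.2.le) _)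
  · exact le_rfl

lemma measurable_truncPowKernel (r : ℝ) :
    Measurable fun q : (ℝ × ℝ) × ℝ => truncPowKernel r q.2 q.1 := by
  unfold truncPowKernel
  refine Measurable.ite ?_ (by fun_prop) measurable_const
  exact (measurableSet_le measurable_fst.fst measurable_snd).inter
    (measurableSet_lt measurable_snd measurable_fst.snd)

lemma integral_mul_rpow_sub (hr : 0 < r) (x y : ℝ) :
    ∫ s in x..y, r * (y - s) ^ (r - 1) = (y - x) ^ r := by
  rw [intervalIntegral.integral_const_mul, intervalIntegral.integral_comp_sub_left
    (fun t => t ^ (r - 1)), sub_self, integral_rpow (Or.inl (by linarith)), sub_add_cancel,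
    Real.zero_rpow hr.ne', sub_zero, mul_div_cancel₀ _ hr.ne']

lemma lintegral_truncPowKernel (hr : 0 < r) (p : ℝ × ℝ) :
    ∫⁻ s, ENNReal.ofReal (truncPowKernel r s p) = ENNReal.ofReal (max (p.2 - p.1) 0 ^ r) := by
  obtain ⟨x, y⟩ := p
  have hind : (fun s => ENNReal.ofReal (truncPowKernel r s (x, y))) =
      (Ico x y).indicator fun s => ENNReal.ofReal (r * (y - s) ^ (r - 1)) := by
    ext s
    simp only [truncPowKernel, indicator, mem_Ico]
    split_ifs <;> simp
  rw [hind, lintegral_indicator measurableSet_Ico]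
  rcases le_or_gt y x with hyx | hxy
  · rw [Ico_eq_empty hyx.not_gt, Measure.restrict_empty, lintegral_zero_measure,
      max_eq_right (sub_nonpos.2 hyx), Real.zero_rpow hr.ne', ENNReal.ofReal_zero]
  have hint : IntervalIntegrable (fun s => (y - s) ^ (r - 1)) volume x y := by
    simpa only [sub_sub_cancel, sub_zero] using
      (intervalIntegral.intervalIntegrable_rpow' (a := y - x) (b := 0)
        (by linarith : -1 < r - 1)).comp_sub_left y
  have hint' : IntegrableOn (fun s => r * (y - s) ^ (r - 1)) (Ico x y) :=
    ((intervalIntegrable_iff_integrableOn_Icc_of_le hxy.le).1 (hint.const_mul r)).mono_set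
      Ico_subset_Icc_self
  rw [max_eq_left (sub_pos.2 hxy).le, ← integral_mul_rpow_sub hr,
    intervalIntegral.integral_of_le hxy.le, ← integral_Ico_eq_integral_Ioc,
    ofReal_integral_eq_lintegral_ofReal hint']
  filter_upwards [ae_restrict_mem measurableSet_Ico] with s hs
  exact mul_nonneg hr.le (Real.rpow_nonneg (sub_nonneg.2 hs.2.le) _)

lemma setOf_lt_truncPowKernel (hr : 1 ≤ r) (s : ℝ) {l : ℝ} (hl : 0 ≤ l) :
    {p | l < truncPowKernel r s p} = ∅ ∨
      ∃ c, {p | l < truncPowKernel r s p} = Iic s ×ˢ Ioi c := by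
  set U := {y : ℝ | s < y ∧ l < r * (y - s) ^ (r - 1)}
  have hprod : {p | l < truncPowKernel r s p} = Iic s ×ˢ U := by
    ext ⟨x, y⟩
    simp only [truncPowKernel, U, mem_ofPred_eq, mem_prod, mem_Iic]
    split_ifs with h
    · simp [h]
    · exact iff_of_false hl.not_gt fun ⟨hx, hy, _⟩ => h ⟨hx, hy⟩
  have hUp : IsUpperSet U := fun y y' hyy' ⟨hy, hly⟩ =>
    ⟨hy.trans_le hyy', hly.trans_le (mul_le_mul_of_nonneg_left
      (Real.rpow_le_rpow (sub_nonneg.2 hy.le) (by linarith) (by linarith)) (by linarith))⟩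
  have hUo : IsOpen U := isOpen_Ioi.inter (isOpen_lt continuous_const
    (continuous_const.mul ((Real.continuous_rpow_const (by linarith)).comp
      (continuous_id.sub continuous_const))))
  rcases U.eq_empty_or_nonempty with hU | hU
  · exact Or.inl (by rw [hprod, hU, prod_empty])
  · exact Or.inr ⟨sInf U, by rw [hprod, ← hUp.eq_Ioi_csInf hUo ⟨s, fun y hy => hy.1.le⟩ hU]⟩

end TruncPowKernel

lemma lintegral_posPart_rpow_eq (π : Measure (ℝ × ℝ)) [SFinite π] {r : ℝ} (hr : 0 < r) :
    ∫⁻ p, ENNReal.ofReal (max (p.2 - p.1) 0 ^ r) ∂π =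
      ∫⁻ s, ∫⁻ l in Ioi 0, π {p | l < truncPowKernel r s p} := calc
  _ = ∫⁻ p, (∫⁻ s, ENNReal.ofReal (truncPowKernel r s p)) ∂π :=
      lintegral_congr fun p => (lintegral_truncPowKernel hr p).symm
  _ = ∫⁻ s, ∫⁻ p, ENNReal.ofReal (truncPowKernel r s p) ∂π :=
      lintegral_lintegral_swap (measurable_truncPowKernel r).ennreal_ofReal.aemeasurable
  _ = _ := lintegral_congr fun s => lintegral_eq_lintegral_meas_lt π
      (ae_of_all _ (truncPowKernel_nonneg hr.le s))
      ((measurable_truncPowKernel r).comp measurable_prodMk_right).aemeasurable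

lemma lintegral_posPart_rpow_mono {π π' : Measure (ℝ × ℝ)} [SFinite π] [SFinite π'] {r : ℝ}
    (hr : 1 ≤ r) (h : ∀ s c, π (Iic s ×ˢ Ioi c) ≤ π' (Iic s ×ˢ Ioi c)) :
    ∫⁻ p, ENNReal.ofReal (max (p.2 - p.1) 0 ^ r) ∂π ≤
      ∫⁻ p, ENNReal.ofReal (max (p.2 - p.1) 0 ^ r) ∂π' := by
  rw [lintegral_posPart_rpow_eq π (by linarith), lintegral_posPart_rpow_eq π' (by linarith)]
  refine lintegral_mono fun s => setLIntegral_mono' measurableSet_Ioi fun l hl => ?_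
  rcases setOf_lt_truncPowKernel hr s (le_of_lt hl) with h0 | ⟨c, hc⟩
  · simp [h0]
  · simpa only [hc] using h s c

lemma ofReal_abs_sub_rpow {r : ℝ} (hr : 0 < r) (x y : ℝ) :
    ENNReal.ofReal (|x - y| ^ r) =
      ENNReal.ofReal (max (y - x) 0 ^ r) + ENNReal.ofReal (max (x - y) 0 ^ r) := by
  rcases le_total x y with h | h
  · rw [abs_sub_comm, abs_of_nonneg (sub_nonneg.2 h), max_eq_left (sub_nonneg.2 h),
      max_eq_right (sub_nonpos.2 h), Real.zero_rpow hr.ne', ENNReal.ofReal_zero, add_zero]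
  · rw [abs_of_nonneg (sub_nonneg.2 h), max_eq_left (sub_nonneg.2 h),
      max_eq_right (sub_nonpos.2 h), Real.zero_rpow hr.ne', ENNReal.ofReal_zero, zero_add]

lemma lintegral_abs_sub_rpow_mono {π π' : Measure (ℝ × ℝ)} [SFinite π] [SFinite π'] {r : ℝ}
    (hr : 1 ≤ r) (h₁ : ∀ s c, π (Iic s ×ˢ Ioi c) ≤ π' (Iic s ×ˢ Ioi c))
    (h₂ : ∀ s c, π (Ioi c ×ˢ Iic s) ≤ π' (Ioi c ×ˢ Iic s)) :
    ∫⁻ p, ENNReal.ofReal (|p.1 - p.2| ^ r) ∂π ≤ ∫⁻ p, ENNReal.ofReal (|p.1 - p.2| ^ r) ∂π' := by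
  have hg : Measurable fun p : ℝ × ℝ => ENNReal.ofReal (max (p.2 - p.1) 0 ^ r) := by fun_prop
  have hsplit (ρ : Measure (ℝ × ℝ)) : ∫⁻ p, ENNReal.ofReal (|p.1 - p.2| ^ r) ∂ρ =
      ∫⁻ p, ENNReal.ofReal (max (p.2 - p.1) 0 ^ r) ∂ρ +
        ∫⁻ p, ENNReal.ofReal (max (p.2 - p.1) 0 ^ r) ∂ρ.map Prod.swap := by
    rw [lintegral_map hg measurable_swap, ← lintegral_add_left hg]
    exact lintegral_congr fun p => ofReal_abs_sub_rpow (by linarith) p.1 p.2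
  have hswap (ρ : Measure (ℝ × ℝ)) (s c : ℝ) :
      ρ.map Prod.swap (Iic s ×ˢ Ioi c) = ρ (Ioi c ×ˢ Iic s) := by
    rw [Measure.map_apply measurable_swap (measurableSet_Iic.prod measurableSet_Ioi),
      preimage_swap_prod]
  rw [hsplit π, hsplit π']
  exact add_le_add (lintegral_posPart_rpow_mono hr h₁)
    (lintegral_posPart_rpow_mono hr fun s c => by simpa only [hswap] using h₂ s c)

section Quantile

variable {μ : Measure ℝ} [IsProbabilityMeasure μ] {u : ℝ}

lemma quantileFun_le_iff (hu₀ : 0 < u) (hu₁ : u < 1) {x : ℝ} :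
    quantileFun μ u ≤ x ↔ u ≤ cdf μ x := by
  have hS : {x : ℝ | u ≤ (μ (Iic x)).toReal} = {x | u ≤ cdf μ x} := by
    simp only [cdf_eq_real, measureReal_def]
  rw [quantileFun, hS]
  set S := {x | u ≤ cdf μ x}
  have hbdd : BddBelow S := by
    obtain ⟨a, ha⟩ := eventually_atBot.mp ((tendsto_cdf_atBot μ).eventually (gt_mem_nhds hu₀))
    exact ⟨a, fun x hx => le_of_not_gt fun hxa => (ha x hxa.le).not_ge hx⟩
  have hne : S.Nonempty :=
    ((tendsto_cdf_atTop μ).eventually (lt_mem_nhds hu₁)).exists.imp fun _ hx => hx.le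
  have hmem : sInf S ∈ S := by
    refine ge_of_tendsto (((cdf μ).right_continuous _).mono Ioi_subset_Ici_self) ?_
    filter_upwards [self_mem_nhdsWithin] with x hx
    obtain ⟨y, hyS, hyx⟩ := exists_lt_of_csInf_lt hne hx
    exact hyS.trans (monotone_cdf μ hyx.le)
  exact ⟨fun h => hmem.trans (monotone_cdf μ h), fun h => csInf_le hbdd h⟩

lemma lt_quantileFun_iff (hu₀ : 0 < u) (hu₁ : u < 1) {x : ℝ} :
    x < quantileFun μ u ↔ cdf μ x < u := by
  simpa only [not_le] using (quantileFun_le_iff hu₀ hu₁).not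

lemma monotoneOn_quantileFun : MonotoneOn (quantileFun μ) (Ioo 0 1) := fun _ hu _ hv huv =>
  (quantileFun_le_iff hu.1 hu.2).2 (huv.trans ((quantileFun_le_iff hv.1 hv.2).1 le_rfl))

end Quantile

noncomputable def quantileCoupling (μ₁ μ₂ : Measure ℝ) : Measure (ℝ × ℝ) :=
  (volume.restrict (Ioo 0 1)).map fun u => (quantileFun μ₁ u, quantileFun μ₂ u)

instance (μ₁ μ₂ : Measure ℝ) : SFinite (quantileCoupling μ₁ μ₂) :=
  inferInstanceAs (SFinite (Measure.map _ _))

section QuantileCoupling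

variable (μ₁ μ₂ : Measure ℝ) [IsProbabilityMeasure μ₁] [IsProbabilityMeasure μ₂]

lemma aemeasurable_quantileFun_prod :
    AEMeasurable (fun u => (quantileFun μ₁ u, quantileFun μ₂ u)) (volume.restrict (Ioo 0 1)) :=
  (aemeasurable_restrict_of_monotoneOn measurableSet_Ioo monotoneOn_quantileFun).prodMk
    (aemeasurable_restrict_of_monotoneOn measurableSet_Ioo monotoneOn_quantileFun)

lemma quantileCoupling_apply_prod {A B : Set ℝ} (hA : MeasurableSet A) (hB : MeasurableSet B) :
    quantileCoupling μ₁ μ₂ (A ×ˢ B) =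
      volume ({u | quantileFun μ₁ u ∈ A ∧ quantileFun μ₂ u ∈ B} ∩ Ioo 0 1) := by
  rw [quantileCoupling, Measure.map_apply_of_aemeasurable (aemeasurable_quantileFun_prod μ₁ μ₂)
    (hA.prod hB), Measure.restrict_apply' measurableSet_Ioo]
  rfl

lemma quantileCoupling_Iic_prod_Ioi_le (s c : ℝ) :
    quantileCoupling μ₁ μ₂ (Iic s ×ˢ Ioi c) ≤ μ₁ (Iic s) - μ₂ (Iic c) := by
  rw [quantileCoupling_apply_prod μ₁ μ₂ measurableSet_Iic measurableSet_Ioi]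
  calc _ ≤ volume (Ioc (cdf μ₂ c) (cdf μ₁ s)) := by
        refine measure_mono fun u ⟨⟨hs, hc⟩, hu⟩ => ⟨?_, ?_⟩
        · exact (lt_quantileFun_iff hu.1 hu.2).1 hc
        · exact (quantileFun_le_iff hu.1 hu.2).1 hs
    _ = μ₁ (Iic s) - μ₂ (Iic c) := by
        rw [Real.volume_Ioc, ENNReal.ofReal_sub _ (cdf_nonneg μ₂ c), ofReal_cdf, ofReal_cdf]

lemma quantileCoupling_Ioi_prod_Iic_le (s c : ℝ) :
    quantileCoupling μ₁ μ₂ (Ioi c ×ˢ Iic s) ≤ μ₂ (Iic s) - μ₁ (Iic c) := by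
  have h := quantileCoupling_Iic_prod_Ioi_le μ₂ μ₁ s c
  rw [quantileCoupling_apply_prod _ _ measurableSet_Iic measurableSet_Ioi] at h
  rw [quantileCoupling_apply_prod _ _ measurableSet_Ioi measurableSet_Iic]
  simpa only [and_comm] using h

end QuantileCoupling

/-- For random variables `X, Y` on a common probability space and `1 ≤ r < ∞`,
`∫₀¹ |Q_X(u) - Q_Y(u)|^r du ≤ E[|X - Y|^r]` (the `r`-Wasserstein coupling bound). -/
theorem wasserstein_quantile_le_coupling
    {Ω : Type*} [MeasurableSpace Ω] (P : Measure Ω) [IsProbabilityMeasure P]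
    (X Y : Ω → ℝ) (hX : Measurable X) (hY : Measurable Y)
    (r : ℝ) (hr : 1 ≤ r) :
    ∫⁻ u in Set.Ioo (0 : ℝ) 1,
        ENNReal.ofReal (|quantileFun (Measure.map X P) u - quantileFun (Measure.map Y P) u| ^ r)
      ≤ ∫⁻ ω, ENNReal.ofReal (|X ω - Y ω| ^ r) ∂P := by
  have := Measure.isProbabilityMeasure_map (μ := P) hX.aemeasurable
  have := Measure.isProbabilityMeasure_map (μ := P) hY.aemeasurable
  have hcost : Measurable fun p : ℝ × ℝ => ENNReal.ofReal (|p.1 - p.2| ^ r) := by fun_prop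
  have h₁ (s c : ℝ) : quantileCoupling (P.map X) (P.map Y) (Iic s ×ˢ Ioi c) ≤
      P.map (fun ω => (X ω, Y ω)) (Iic s ×ˢ Ioi c) :=
    (quantileCoupling_Iic_prod_Ioi_le _ _ s c).trans <| by
      simpa only [compl_Iic] using
        map_sub_map_le_map_prod_compl P hX hY measurableSet_Iic measurableSet_Iic
  have h₂ (s c : ℝ) : quantileCoupling (P.map X) (P.map Y) (Ioi c ×ˢ Iic s) ≤
      P.map (fun ω => (X ω, Y ω)) (Ioi c ×ˢ Iic s) :=
    (quantileCoupling_Ioi_prod_Iic_le _ _ s c).trans <| by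
      simpa only [compl_Iic] using
        map_sub_map_le_map_compl_prod P hX hY (measurableSet_Iic (a := c)) measurableSet_Iic
  calc _ = ∫⁻ p, ENNReal.ofReal (|p.1 - p.2| ^ r) ∂quantileCoupling (P.map X) (P.map Y) :=
        (lintegral_map' hcost.aemeasurable (aemeasurable_quantileFun_prod _ _)).symm
    _ ≤ ∫⁻ p, ENNReal.ofReal (|p.1 - p.2| ^ r) ∂P.map (fun ω => (X ω, Y ω)) :=
        lintegral_abs_sub_rpow_mono hr h₁ h₂
    _ = _ := lintegral_map hcost (hX.prodMk hY)
end

section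
/- Let a, b ∈ ℝⁿ, let a^{(i)}, b^{(i)} denote their i-th smallest entries, and let w₁, …, w_n ≥ 0. Then for conjugate exponents 1 ≤ p, q ≤ ∞ with 1/p + 1/q = 1, |Σ_{i=1}^n w_i (a^{(i)} − b^{(i)})| ≤ (Σ_{i=1}^n w_i^q)^{1/q} · (Σ_{i=1}^n |a^i − b^i|^p)^{1/p} (with the usual sup-norm interpretation when an exponent equals ∞). -/
open scoped ENNReal

/-- The `i`-th smallest entry of the tuple `x` (nondecreasing rearrangement). -/
noncomputable def sortedTuple {n : ℕ} (x : Fin n → ℝ) : Fin n → ℝ :=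
  fun i => x (Tuple.sort x i)

/-- The `ℓ^p` norm of a tuple, `p ∈ [1,∞]`, with the sup-norm interpretation for `p = ∞`. -/
noncomputable def lpTupleNorm {n : ℕ} (p : ℝ≥0∞) (v : Fin n → ℝ) : ℝ :=
  if p = ∞ then ⨆ i, |v i| else (∑ i : Fin n, |v i| ^ p.toReal) ^ (1 / p.toReal)

/-!
For a convex `φ` and nondecreasing sequences `x, y`, the cost `c i j = φ (x i - y j)` satisfies the
Monge inequality `c i j + c i' j' ≤ c i j' + c i' j` (`i ≤ i'`, `j ≤ j'`), because increments of a
convex function increase. Repeatedly uncrossing a permutation shows that the identity matching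
minimises `∑ i, c i (σ i)`; hence pairing the sorted entries of `a` and `b` can only decrease
`∑ φ (a i - b i)`. With `φ = |·|^p` this bounds the `ℓ^p` norm of `a^{(·)} - b^{(·)}` by that of
`a - b`, and with a convex penalty vanishing on `[-M, M]` it bounds the sup norm. Hölder's
inequality for `ℓ^p` spaces finishes the proof.
-/

open Finset

theorem sum_le_sum_comp_perm_of_monge {ι β : Type*} [LinearOrder ι] [Fintype ι] [AddCommMonoid β]
    [PartialOrder β] [IsOrderedAddMonoid β] (c : ι → ι → β)
    (hc : ∀ ⦃i i' j j'⦄, i ≤ i' → j ≤ j' → c i j + c i' j' ≤ c i j' + c i' j)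
    (σ : Equiv.Perm ι) : ∑ i, c i i ≤ ∑ i, c i (σ i) := by
  induction hσ : #σ.support using Nat.strong_induction_on generalizing σ with
  | _ m ih =>
  subst hσ
  rcases σ.support.eq_empty_or_nonempty with hempty | hne
  · rw [Equiv.Perm.support_eq_empty_iff.1 hempty]
    rfl
  set j := σ.support.max' hne
  set k := σ.symm j
  have hj : σ j ≠ j := Equiv.Perm.mem_support.1 (σ.support.max'_mem hne)
  have hσk : σ k = j := σ.apply_symm_apply j
  have hkj : k ≠ j := fun h => hj (h ▸ hσk)
  have hk_le : k ≤ j := σ.support.le_max' k (Equiv.Perm.mem_support.2 (hσk ▸ hkj.symm))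
  have hσj_le : σ j ≤ j :=
    σ.support.le_max' _ (Equiv.Perm.apply_mem_support.2 (σ.support.max'_mem hne))
  -- `τ` fixes the largest moved point `j` and redirects `σ⁻¹ j` to `σ j`: fewer moved points,
  -- and the Monge inequality for `σ⁻¹ j ≤ j`, `σ j ≤ j` says the cost does not go up.
  set τ := Equiv.swap j (σ j) * σ
  have hτ : ∀ x ∈ ({k, j} : Finset ι)ᶜ, τ x = σ x := by
    intro x hx
    simp only [mem_compl, mem_insert, mem_singleton, not_or] at hx
    refine Equiv.swap_apply_of_ne_of_ne ?_ ?_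
    · rw [← hσk]; exact σ.injective.ne hx.1
    · exact σ.injective.ne hx.2
  calc ∑ i, c i i ≤ ∑ i, c i (τ i) := ih _ (Equiv.Perm.card_support_swap_mul hj) τ rfl
    _ ≤ ∑ i, c i (σ i) := by
      rw [← sum_compl_add_sum {k, j}, ← sum_compl_add_sum {k, j} (fun i => c i (σ i)),
        sum_congr rfl fun x hx => congrArg (c x) (hτ x hx), sum_pair hkj, sum_pair hkj]
      refine add_le_add_right ?_ _
      simp only [τ, Equiv.Perm.mul_apply, hσk, Equiv.swap_apply_left, Equiv.swap_apply_right]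
      exact hc hk_le hσj_le

theorem ConvexOn.map_add_add_map_add_le {s : Set ℝ} {φ : ℝ → ℝ} (hφ : ConvexOn ℝ s φ)
    {x h₁ h₂ : ℝ} (hx : x ∈ s) (hy : x + h₁ + h₂ ∈ s) (h₁0 : 0 ≤ h₁) (h₂0 : 0 ≤ h₂) :
    φ (x + h₁) + φ (x + h₂) ≤ φ x + φ (x + h₁ + h₂) := by
  rcases (add_nonneg h₁0 h₂0).eq_or_lt with h | h
  · obtain rfl : h₁ = 0 := by linarith
    obtain rfl : h₂ = 0 := by linarith
    simp
  have key : ∀ {t₁ t₂ : ℝ}, 0 ≤ t₁ → 0 ≤ t₂ → t₁ + t₂ = h₁ + h₂ →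
      φ (x + t₁) ≤ t₂ / (h₁ + h₂) * φ x + t₁ / (h₁ + h₂) * φ (x + h₁ + h₂) := by
    intro t₁ t₂ ht₁ ht₂ ht
    have hpt : x + t₁ = t₂ / (h₁ + h₂) * x + t₁ / (h₁ + h₂) * (x + h₁ + h₂) := by
      field_simp
      linear_combination -x * ht
    rw [hpt]
    exact hφ.2 hx hy (div_nonneg ht₂ h.le) (div_nonneg ht₁ h.le)
      (by rw [← add_div, add_comm, ht, div_self h.ne'])
  refine (add_le_add (key h₁0 h₂0 rfl) (key h₂0 h₁0 (add_comm _ _))).trans_eq ?_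
  field_simp
  ring

theorem sum_map_sortedTuple_sub_le {n : ℕ} {φ : ℝ → ℝ} (hφ : ConvexOn ℝ Set.univ φ)
    (a b : Fin n → ℝ) :
    ∑ i, φ (sortedTuple a i - sortedTuple b i) ≤ ∑ i, φ (a i - b i) := by
  have hmonge : ∀ ⦃i i' j j' : Fin n⦄, i ≤ i' → j ≤ j' →
      φ (sortedTuple a i - sortedTuple b j) + φ (sortedTuple a i' - sortedTuple b j') ≤
        φ (sortedTuple a i - sortedTuple b j') + φ (sortedTuple a i' - sortedTuple b j) := by
    intro i i' j j' hi hj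
    have := hφ.map_add_add_map_add_le (x := sortedTuple a i - sortedTuple b j') trivial trivial
      (sub_nonneg.2 (Tuple.monotone_sort b hj)) (sub_nonneg.2 (Tuple.monotone_sort a hi))
    convert this using 3 <;> simp only [sortedTuple, Function.comp_apply] <;> ring
  calc ∑ i, φ (sortedTuple a i - sortedTuple b i)
      ≤ ∑ i, φ (sortedTuple a i - sortedTuple b ((Tuple.sort a).trans (Tuple.sort b).symm i)) :=
        sum_le_sum_comp_perm_of_monge _ hmonge _
    _ = ∑ i, φ (a i - b i) := by
        simp only [sortedTuple, Equiv.trans_apply, Equiv.apply_symm_apply]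
        exact Equiv.sum_comp (Tuple.sort a) fun i => φ (a i - b i)

theorem abs_sortedTuple_sub_le {n : ℕ} {a b : Fin n → ℝ} {M : ℝ} (h : ∀ i, |a i - b i| ≤ M)
    (i : Fin n) : |sortedTuple a i - sortedTuple b i| ≤ M := by
  set φ : ℝ → ℝ := fun x => max (|x| - M) 0
  have hφ : ConvexOn ℝ Set.univ φ :=
    ((convexOn_univ_norm : ConvexOn ℝ Set.univ fun x : ℝ => |x|).sub
      (concaveOn_const M convex_univ)).sup (convexOn_const 0 convex_univ)
  have : |sortedTuple a i - sortedTuple b i| - M ≤ 0 := calc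
    _ ≤ φ (sortedTuple a i - sortedTuple b i) := le_max_left _ _
    _ ≤ ∑ j, φ (sortedTuple a j - sortedTuple b j) :=
      single_le_sum (f := fun j => φ (sortedTuple a j - sortedTuple b j))
        (fun j _ => le_max_right _ _) (mem_univ i)
    _ ≤ ∑ j, φ (a j - b j) := sum_map_sortedTuple_sub_le hφ a b
    _ = 0 := sum_eq_zero fun j _ => max_eq_right (sub_nonpos.2 (h j))
  linarith

theorem convexOn_univ_abs_rpow {p : ℝ} (hp : 1 ≤ p) : ConvexOn ℝ Set.univ fun x : ℝ => |x| ^ p := by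
  have himage : (fun x : ℝ => |x|) '' Set.univ = Set.Ici 0 :=
    Set.ext fun y => ⟨by rintro ⟨x, -, rfl⟩; exact abs_nonneg x,
      fun hy => ⟨y, trivial, abs_of_nonneg hy⟩⟩
  have habs : ConvexOn ℝ Set.univ fun x : ℝ => |x| := convexOn_univ_norm
  exact (himage ▸ convexOn_rpow hp :).comp habs
    (himage ▸ Real.monotoneOn_rpow_Ici_of_exponent_nonneg (by linarith))

theorem lpTupleNorm_nonneg {n : ℕ} (p : ℝ≥0∞) (v : Fin n → ℝ) : 0 ≤ lpTupleNorm p v := by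
  unfold lpTupleNorm
  split_ifs
  · exact Real.iSup_nonneg fun i => abs_nonneg _
  · positivity

theorem lpTupleNorm_sortedTuple_sub_le {n : ℕ} {p : ℝ≥0∞} (hp : 1 ≤ p) (a b : Fin n → ℝ) :
    lpTupleNorm p (fun i => sortedTuple a i - sortedTuple b i) ≤
      lpTupleNorm p (fun i => a i - b i) := by
  unfold lpTupleNorm
  split_ifs with htop
  · have hle : ∀ j, |a j - b j| ≤ ⨆ j, |a j - b j| := le_ciSup (Finite.bddAbove_range _)
    exact Real.iSup_le (abs_sortedTuple_sub_le hle) (Real.iSup_nonneg fun j => abs_nonneg _)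
  · have hp' : 1 ≤ p.toReal := ENNReal.toReal_one ▸ ENNReal.toReal_mono htop hp
    exact Real.rpow_le_rpow (by positivity)
      (sum_map_sortedTuple_sub_le (convexOn_univ_abs_rpow hp') a b) (by positivity)

theorem lpTupleNorm_eq_norm {n : ℕ} {p : ℝ≥0∞} (hp : p ≠ 0) (v : Fin n → ℝ) :
    lpTupleNorm p v = ‖(⟨v, Memℓp.all v⟩ : lp (fun _ : Fin n => ℝ) p)‖ := by
  unfold lpTupleNorm
  split_ifs with htop
  · subst htop; rw [lp.norm_eq_ciSup]; rfl
  · rw [lp.norm_eq_tsum_rpow (ENNReal.toReal_pos hp htop), tsum_fintype]; rfl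

theorem abs_sum_mul_le_lpTupleNorm_mul {n : ℕ} {p q : ℝ≥0∞} [p.HolderConjugate q]
    (u v : Fin n → ℝ) :
    |∑ i, u i * v i| ≤ lpTupleNorm p u * lpTupleNorm q v := by
  have : Fact (1 ≤ p) := ⟨ENNReal.HolderConjugate.one_le p q⟩
  have : Fact (1 ≤ q) := ⟨ENNReal.HolderConjugate.one_le q p⟩
  let B : Fin n → ℝ →L[ℝ] ℝ →L[ℝ] ℝ := fun _ => ContinuousLinearMap.mul ℝ ℝ
  have hB : ∀ i, ‖B i‖ ≤ (1 : NNReal) := fun _ => ContinuousLinearMap.opNorm_mul_le ℝ ℝ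
  let P := lp.dualPairing p q B hB
  calc |∑ i, u i * v i| = ‖P ⟨u, Memℓp.all u⟩ ⟨v, Memℓp.all v⟩‖ := by
        rw [lp.dualPairing_apply, tsum_fintype]; rfl
    _ ≤ ‖P‖ * _ * _ := P.le_opNorm₂ _ _
    _ ≤ 1 * _ * _ := by gcongr; exact lp.norm_dualPairing B hB
    _ = _ := by
      rw [one_mul, lpTupleNorm_eq_norm (ENNReal.HolderConjugate.ne_zero p q),
        lpTupleNorm_eq_norm (ENNReal.HolderConjugate.ne_zero q p)]

theorem weighted_sorted_diff_holder_general {n : ℕ} (a b : Fin n → ℝ)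
    (w : Fin n → ℝ)
    (p q : ℝ≥0∞) (hp : 1 ≤ p) (hpq : 1 / p + 1 / q = 1) :
    |∑ i : Fin n, w i * (sortedTuple a i - sortedTuple b i)|
      ≤ lpTupleNorm q w * lpTupleNorm p (fun i => a i - b i) := by
  have : q.HolderConjugate p := ENNReal.holderConjugate_iff.2 (by simpa [add_comm] using hpq)
  calc _ ≤ lpTupleNorm q w * lpTupleNorm p (fun i => sortedTuple a i - sortedTuple b i) :=
        abs_sum_mul_le_lpTupleNorm_mul w _
    _ ≤ _ := by
        gcongr
        · exact lpTupleNorm_nonneg q w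
        · exact lpTupleNorm_sortedTuple_sub_le hp a b

/-- Hölder inequality for weighted differences of sorted tuples:
for nonnegative weights `w` and conjugate exponents `1 ≤ p, q ≤ ∞`,
`|∑ᵢ wᵢ (a^{(i)} - b^{(i)})| ≤ ‖w‖_{ℓ^q} ‖a - b‖_{ℓ^p}`. -/
theorem weighted_sorted_diff_holder {n : ℕ} (a b : Fin n → ℝ)
    (w : Fin n → ℝ) (hw : ∀ i, 0 ≤ w i)
    (p q : ℝ≥0∞) (hp : 1 ≤ p) (hpq : 1 / p + 1 / q = 1) :
    |∑ i : Fin n, w i * (sortedTuple a i - sortedTuple b i)|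
      ≤ lpTupleNorm q w * lpTupleNorm p (fun i => a i - b i) :=
  weighted_sorted_diff_holder_general a b w p q hp hpq
end
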